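/- arXiv:2404.09891 — 2 statements merged into one kernel-verified Lean document; each statement's English description precedes it below -/
import Mathlib

section
/- For integers 1 ≤ m ≤ n and indeterminates λ, y, the identity sum_{i=m}^{n} sum_{j=m}^{i} (-1)^{n+i} [n,i] C(i,j) {j,m} λ^{i-j} y^{j} = (n!/m!) * sum_{k=0}^{m} (-1)^{m+k} C(m,k) C(λ+ky, n) holds, where C(λ+ky, n) = (λ+ky)(λ+ky-1)⋯(λ+ky-n+1)/n! is the generalized binomial coefficient as a polynomial in λ and y. -/
open Finset

/-- Unsigned Stirling numbers of the first kind. -/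
def stirling1 : ℕ → ℕ → ℕ
  | 0, 0 => 1
  | 0, _ + 1 => 0
  | _ + 1, 0 => 0
  | n + 1, k + 1 => n * stirling1 n (k + 1) + stirling1 n k

/-- Stirling numbers of the second kind. -/
def stirling2 : ℕ → ℕ → ℕ
  | 0, 0 => 1
  | 0, _ + 1 => 0
  | _ + 1, 0 => 0
  | n + 1, k + 1 => (k + 1) * stirling2 n (k + 1) + stirling2 n k

/-- Generalized binomial coefficient `C(x, r) = x(x-1)⋯(x-r+1)/r!` in a ℚ-algebra. -/
noncomputable def gchoose {R : Type*} [CommRing R] [Algebra ℚ R] (x : R) (r : ℕ) : R :=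
  algebraMap ℚ R ((r.factorial : ℚ)⁻¹) * ∏ i ∈ Finset.range r, (x - i)

/-!
Multiply out `n! C(x, n) = x(x-1)⋯(x-n+1) = ∑ᵢ (-1)^(n+i) [n,i] xⁱ` and expand each `(λ + k y)ⁱ`
binomially. The right-hand side then only involves the alternating sums
`∑ₖ (-1)^(m+k) C(m,k) kʲ`, i.e. the `m`-th forward differences of `x ↦ xʲ` at `0`, and these equal
`m! {j,m}`: the Leibniz rule `Δ^(m+1) (x f) 0 = (m+1) Δ^m f 1` reproduces the recurrence of the
Stirling numbers of the second kind. Since `{j,m} = 0` for `j < m`, the sums over `[m, n]` and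
`[m, i]` on the left may be taken over `[0, n]` and `[0, i]`.
-/

open fwdDiff

theorem stirling1_eq_stirlingFirst : ∀ n k, stirling1 n k = Nat.stirlingFirst n k
  | 0, 0 | 0, _ + 1 | _ + 1, 0 => rfl
  | n + 1, k + 1 => by
    rw [stirling1, Nat.stirlingFirst_succ_succ, stirling1_eq_stirlingFirst n (k + 1),
      stirling1_eq_stirlingFirst n k]

theorem stirling2_eq_stirlingSecond : ∀ n k, stirling2 n k = Nat.stirlingSecond n k
  | 0, 0 | 0, _ + 1 | _ + 1, 0 => rfl
  | n + 1, k + 1 => by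
    rw [stirling2, Nat.stirlingSecond_succ_succ, stirling2_eq_stirlingSecond n (k + 1),
      stirling2_eq_stirlingSecond n k]

theorem fwdDiff_iter_succ_apply {M G : Type*} [AddCommMonoid M] [AddCommGroup G] (h : M)
    (f : M → G) (n : ℕ) (y : M) :
    Δ_[h] ^[n + 1] f y = Δ_[h] ^[n] f (y + h) - Δ_[h] ^[n] f y := by
  rw [Function.iterate_succ_apply']
  rfl

theorem sum_Icc_eq_sum_range_succ {M : Type*} [AddCommMonoid M] {f : ℕ → M} {m : ℕ}
    (hf : ∀ i < m, f i = 0) (n : ℕ) : ∑ i ∈ Icc m n, f i = ∑ i ∈ range (n + 1), f i :=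
  sum_subset (fun i hi ↦ by rw [mem_Icc] at hi; rw [mem_range]; omega)
    fun i hi hi' ↦ hf i (by rw [mem_range] at hi; rw [mem_Icc] at hi'; omega)

section CommRing

variable {R : Type*} [CommRing R]

theorem prod_range_add_eq_sum_stirlingFirst (n : ℕ) (x : R) :
    ∏ i ∈ range n, (x + i) = ∑ i ∈ range (n + 1), (n.stirlingFirst i : R) * x ^ i := by
  induction n with
  | zero => simp
  | succ n ih =>
    have hzero : (n : R) * n.stirlingFirst 0 = 0 := by cases n <;> simp
    have shift : ∑ i ∈ range (n + 1), (n : R) * n.stirlingFirst (i + 1) * x ^ (i + 1) =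
        n * ∑ i ∈ range (n + 1), (n.stirlingFirst i : R) * x ^ i := by
      rw [sum_range_succ, sum_range_succ' (fun i ↦ (n.stirlingFirst i : R) * x ^ i),
        Nat.stirlingFirst_eq_zero_of_lt n.lt_succ_self, mul_add, mul_sum]
      simp [mul_assoc, hzero]
    rw [prod_range_succ, ih, sum_range_succ' (fun i ↦ ((n + 1).stirlingFirst i : R) * x ^ i)]
    simp only [Nat.stirlingFirst_succ_succ, Nat.stirlingFirst_succ_zero, Nat.cast_add,
      Nat.cast_mul, Nat.cast_zero, zero_mul, add_zero, add_mul, sum_add_distrib]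
    rw [shift]
    simp only [pow_succ, ← mul_assoc, ← sum_mul]
    ring

theorem prod_range_sub_eq_sum_stirlingFirst (n : ℕ) (x : R) :
    ∏ i ∈ range n, (x - i) =
      ∑ i ∈ range (n + 1), (-1) ^ (n + i) * (n.stirlingFirst i : R) * x ^ i := by
  have hneg : ∏ i ∈ range n, (x - i) = (-1) ^ n * ∏ i ∈ range n, (-x + i) :=
    calc ∏ i ∈ range n, (x - i) = ∏ i ∈ range n, -(-x + i) := prod_congr rfl fun _ _ ↦ by ring
      _ = _ := by rw [prod_neg, card_range]
  rw [hneg, prod_range_add_eq_sum_stirlingFirst, mul_sum]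
  refine sum_congr rfl fun i _ ↦ ?_
  rw [neg_pow, pow_add]
  ring

theorem fwdDiff_iter_succ_id_mul (g : R → R) (n : ℕ) (y : R) :
    Δ_[1] ^[n + 1] (fun r ↦ r * g r) y =
      y * Δ_[1] ^[n + 1] g y + (n + 1) * Δ_[1] ^[n] g (y + 1) := by
  induction n generalizing y with
  | zero =>
    simp only [zero_add, Function.iterate_one, Function.iterate_zero, id_eq, fwdDiff,
      Nat.cast_zero, one_mul]
    ring
  | succ n ih =>
    rw [fwdDiff_iter_succ_apply _ _ (n + 1), ih, ih, fwdDiff_iter_succ_apply _ g (n + 1),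
      fwdDiff_iter_succ_apply _ g n (y + 1)]
    push_cast
    ring

theorem fwdDiff_iter_pow_eq_factorial_mul_stirlingSecond (j m : ℕ) :
    Δ_[1] ^[m] (fun r : R ↦ r ^ j) 0 = m.factorial * j.stirlingSecond m := by
  induction j generalizing m with
  | zero =>
    cases m with
    | zero => simp
    | succ m => rw [fwdDiff_iter_pow_eq_zero_of_lt m.succ_pos]; simp
  | succ j ih =>
    cases m with
    | zero => simp
    | succ m =>
      have shift : Δ_[1] ^[m] (fun r : R ↦ r ^ j) 1 =
          Δ_[1] ^[m] (fun r : R ↦ r ^ j) 0 + Δ_[1] ^[m + 1] (fun r : R ↦ r ^ j) 0 := by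
        rw [fwdDiff_iter_succ_apply, zero_add, add_sub_cancel]
      simp only [pow_succ']
      rw [fwdDiff_iter_succ_id_mul, zero_add, shift, ih, ih, Nat.stirlingSecond_succ_succ,
        Nat.factorial_succ]
      push_cast
      ring

theorem sum_range_neg_one_pow_mul_choose_mul_pow (j m : ℕ) :
    ∑ k ∈ range (m + 1), (-1) ^ (m + k) * (m.choose k : R) * (k : R) ^ j =
      m.factorial * j.stirlingSecond m := by
  rw [← fwdDiff_iter_pow_eq_factorial_mul_stirlingSecond, fwdDiff_iter_eq_sum_shift]
  refine sum_congr rfl fun k hk ↦ ?_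
  have hkm : m + k = m - k + 2 * k := by have := mem_range.mp hk; omega
  simp [hkm, pow_add, pow_mul]

theorem sum_range_neg_one_pow_mul_choose_mul_add_mul_pow (m i : ℕ) (a b : R) :
    ∑ k ∈ range (m + 1), (-1) ^ (m + k) * (m.choose k : R) * (a + k * b) ^ i =
      m.factorial *
        ∑ j ∈ range (i + 1), (i.choose j : R) * j.stirlingSecond m * a ^ (i - j) * b ^ j := by
  simp_rw [add_comm a, add_pow, mul_sum]
  rw [sum_comm]
  refine sum_congr rfl fun j _ ↦ ?_
  calc ∑ k ∈ range (m + 1),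
          (-1) ^ (m + k) * (m.choose k : R) * ((k * b) ^ j * a ^ (i - j) * i.choose j)
      = (∑ k ∈ range (m + 1), (-1) ^ (m + k) * (m.choose k : R) * (k : R) ^ j) *
          (i.choose j * a ^ (i - j) * b ^ j) := by
        rw [sum_mul]
        exact sum_congr rfl fun _ _ ↦ by ring
    _ = _ := by rw [sum_range_neg_one_pow_mul_choose_mul_pow]; ring

end CommRing

theorem stmt4_general (m n : ℕ) (l y : ℚ) :
    ∑ i ∈ Finset.Icc m n, ∑ j ∈ Finset.Icc m i,
        (-1 : ℚ) ^ (n + i) * stirling1 n i * i.choose j * stirling2 j m * l ^ (i - j) * y ^ j =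
      (n.factorial : ℚ) / m.factorial *
        ∑ k ∈ Finset.range (m + 1),
          (-1 : ℚ) ^ (m + k) * m.choose k * gchoose (l + k * y) n := by
  set A : ℕ → ℚ := fun i ↦ ∑ j ∈ range (i + 1),
    (i.choose j : ℚ) * j.stirlingSecond m * l ^ (i - j) * y ^ j
  have lhs : ∑ i ∈ Icc m n, ∑ j ∈ Icc m i,
        (-1 : ℚ) ^ (n + i) * stirling1 n i * i.choose j * stirling2 j m * l ^ (i - j) * y ^ j =
      ∑ i ∈ range (n + 1), (-1) ^ (n + i) * (n.stirlingFirst i : ℚ) * A i := by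
    rw [sum_Icc_eq_sum_range_succ fun i hi ↦ by rw [Icc_eq_empty_of_lt hi, sum_empty]]
    refine sum_congr rfl fun i _ ↦ ?_
    rw [sum_Icc_eq_sum_range_succ fun j hj ↦ by
      simp [stirling2_eq_stirlingSecond, Nat.stirlingSecond_eq_zero_of_lt hj], mul_sum]
    refine sum_congr rfl fun j _ ↦ ?_
    rw [stirling1_eq_stirlingFirst, stirling2_eq_stirlingSecond]
    ring
  have rhs : ∑ k ∈ range (m + 1), (-1 : ℚ) ^ (m + k) * m.choose k * gchoose (l + k * y) n =
      (n.factorial : ℚ)⁻¹ *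
        ∑ i ∈ range (n + 1), (-1) ^ (n + i) * (n.stirlingFirst i : ℚ) * (m.factorial * A i) := by
    simp only [A, ← sum_range_neg_one_pow_mul_choose_mul_add_mul_pow]
    simp only [gchoose, prod_range_sub_eq_sum_stirlingFirst, mul_sum]
    rw [sum_comm]
    refine sum_congr rfl fun i _ ↦ sum_congr rfl fun k _ ↦ ?_
    simp only [Algebra.algebraMap_self, map_inv₀, map_natCast]
    ring
  rw [lhs, rhs, mul_sum, mul_sum]
  exact sum_congr rfl fun i _ ↦ by field_simp

theorem stmt4 (m n : ℕ) (hm : 1 ≤ m) (hmn : m ≤ n) (l y : ℚ) :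
    ∑ i ∈ Finset.Icc m n, ∑ j ∈ Finset.Icc m i,
        (-1 : ℚ) ^ (n + i) * stirling1 n i * i.choose j * stirling2 j m * l ^ (i - j) * y ^ j =
      (n.factorial : ℚ) / m.factorial *
        ∑ k ∈ Finset.range (m + 1),
          (-1 : ℚ) ^ (m + k) * m.choose k * gchoose (l + k * y) n :=
  stmt4_general m n l y
end

section
/- For integers 1 ≤ m ≤ n, the sum over k from m to n of [n,k] * {k,m} * (-2)^(k-m) equals (n!/m!) * C(m, n-m) * (-2)^(m-n). -/
open Finset

/-!
Write `S_x(n, m) = ∑ₖ [n,k] {k,m} xᵏ`. The recurrences of the two Stirling triangles combine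
to `S_x(n+1, m+1) = n S_x(n, m+1) + x ((m+1) S_x(n, m+1) + S_x(n, m))`. In exponential generating
functions this says `∑ₙ S_x(n, m) tⁿ/n! = ((1-t)^(-x) - 1)^m / m!`, which for `x = -2` is the
polynomial `(t² - 2t)^m / m!`; reading off its coefficients suggests
`S_{-2}(n, m) = n!/m! C(m, n-m) 4^m (-1/2)^n`, and this is checked by induction on `n`, the step
being a linear relation between `C(m+1, r+1)`, `C(m+1, r)` and `C(m, r+1)`.
-/

open Nat

theorem stirling1_eq_stirlingFirst_s8 : stirling1 = stirlingFirst := by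
  funext n k
  induction n, k using stirling1.induct <;> simp_all [stirling1, stirlingFirst]

theorem stirling2_eq_stirlingSecond_s8 : stirling2 = stirlingSecond := by
  funext n k
  induction n, k using stirling2.induct <;> simp_all [stirling2, stirlingSecond]

theorem Nat.cast_choose_succ_right_mul {R : Type*} [Ring R] (n k : ℕ) :
    (n.choose (k + 1) : R) * (k + 1) = n.choose k * (n - k) := by
  rcases le_or_gt k n with hk | hk
  · simpa [Nat.cast_sub hk] using congrArg (Nat.cast : ℕ → R) (choose_succ_right_eq n k)
  · simp [choose_eq_zero_of_lt hk, choose_eq_zero_of_lt (hk.trans (lt_add_one k))]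

theorem Nat.cast_choose_mul_succ {R : Type*} [Ring R] (n k : ℕ) :
    (n.choose k : R) * (n + 1) = (n + 1).choose k * (n + 1 - k) := by
  rcases le_or_gt k (n + 1) with hk | hk
  · simpa [Nat.cast_sub hk] using congrArg (Nat.cast : ℕ → R) (choose_mul_succ_eq n k)
  · simp [choose_eq_zero_of_lt hk, choose_eq_zero_of_lt ((lt_add_one n).trans hk)]

section StirlingProduct

variable {R : Type*} [CommSemiring R]

def stirlingProduct (x : R) (n m : ℕ) : R :=
  ∑ k ∈ range (n + 1), (stirlingFirst n k : R) * stirlingSecond k m * x ^ k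

theorem stirlingProduct_self (x : R) (n : ℕ) : stirlingProduct x n n = x ^ n := by
  rw [stirlingProduct, sum_range_succ, sum_eq_zero fun k hk => ?_]
  · simp [stirlingFirst_self, stirlingSecond_self]
  · simp [stirlingSecond_eq_zero_of_lt (mem_range.mp hk)]

theorem stirlingProduct_succ_zero (x : R) (n : ℕ) : stirlingProduct x (n + 1) 0 = 0 := by
  rw [stirlingProduct, sum_range_succ']
  simp [stirlingFirst_succ_zero, stirlingSecond_succ_zero]

theorem stirlingProduct_succ_succ (x : R) (n m : ℕ) :
    stirlingProduct x (n + 1) (m + 1) =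
      n * stirlingProduct x n (m + 1) +
        x * ((m + 1) * stirlingProduct x n (m + 1) + stirlingProduct x n m) := by
  have shift : stirlingProduct x n (m + 1) = ∑ k ∈ range (n + 1),
      (stirlingFirst n (k + 1) : R) * stirlingSecond (k + 1) (m + 1) * x ^ (k + 1) := by
    rw [stirlingProduct, sum_range_succ', sum_range_succ,
      stirlingFirst_eq_zero_of_lt (lt_add_one n)]
    simp
  rw [stirlingProduct, sum_range_succ']
  nth_rw 1 [shift]
  unfold stirlingProduct
  simp only [stirlingFirst_succ_succ, stirlingSecond_succ_succ, stirlingFirst_succ_zero, cast_zero,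
    zero_mul, add_zero, cast_add, cast_mul, cast_one, mul_sum, ← sum_add_distrib]
  refine sum_congr rfl fun k _ => ?_
  ring

end StirlingProduct

theorem stirlingProduct_neg_two {K : Type*} [Field K] [CharZero K] {n m : ℕ} (h : m ≤ n) :
    stirlingProduct (-2 : K) n m = n ! / m ! * m.choose (n - m) * 4 ^ m * (-1 / 2) ^ n := by
  induction n generalizing m with
  | zero =>
    obtain rfl := Nat.le_zero.mp h
    simp [stirlingProduct_self]
  | succ n ih =>
    obtain rfl | hlt := h.eq_or_lt
    · rw [stirlingProduct_self, Nat.sub_self, choose_zero_right,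
        div_self (cast_ne_zero.mpr (factorial_ne_zero _)), mul_assoc, ← mul_pow]
      norm_num
    cases m with
    | zero => simp [stirlingProduct_succ_zero]
    | succ m =>
      obtain ⟨r, rfl⟩ : ∃ r, n = m + 1 + r := ⟨n - (m + 1), by omega⟩
      rw [stirlingProduct_succ_succ, ih (by omega), ih (by omega),
        show m + 1 + r + 1 - (m + 1) = r + 1 by omega, show m + 1 + r - (m + 1) = r by omega,
        show m + 1 + r - m = r + 1 by omega]
      have h1 := Nat.cast_choose_succ_right_mul (R := K) (m + 1) r
      have h2 := Nat.cast_choose_mul_succ (R := K) m (r + 1)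
      push_cast [factorial_succ] at h1 h2 ⊢
      field_simp
      linear_combination
        ((m + 1 + r)! * (-(1 / 2)) ^ (m + 1 + r) * 4 ^ m / m ! : K) * (4 * h1 - 2 * h2)

theorem sum_Icc_stirlingFirst_mul_stirlingSecond_mul_pow_sub {K : Type*} [Field K] {x : K}
    (hx : x ≠ 0) (n m : ℕ) :
    ∑ k ∈ Icc m n, (stirlingFirst n k : K) * stirlingSecond k m * x ^ (k - m) =
      stirlingProduct x n m / x ^ m := by
  have restrict : ∑ k ∈ Icc m n, (stirlingFirst n k : K) * stirlingSecond k m * x ^ k =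
      stirlingProduct x n m := by
    refine sum_subset (fun k hk => ?_) fun k hk_range hk => ?_
    · simp only [mem_Icc, mem_range] at hk ⊢
      omega
    · simp only [mem_Icc, mem_range, not_and, not_le] at hk hk_range
      rw [stirlingSecond_eq_zero_of_lt (by omega)]
      simp
  rw [← restrict, sum_div]
  refine sum_congr rfl fun k hk => ?_
  rw [pow_sub₀ x hx (mem_Icc.mp hk).1]
  ring

theorem stmt8_general (m n : ℕ) (hmn : m ≤ n) :
    ∑ k ∈ Finset.Icc m n, (stirling1 n k : ℚ) * stirling2 k m * (-2 : ℚ) ^ (k - m) =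
      (n.factorial : ℚ) / m.factorial * m.choose (n - m) * (-2 : ℚ) ^ ((m : ℤ) - n) := by
  have h2 : (-2 : ℚ) ≠ 0 := by norm_num
  rw [stirling1_eq_stirlingFirst_s8, stirling2_eq_stirlingSecond_s8,
    sum_Icc_stirlingFirst_mul_stirlingSecond_mul_pow_sub h2, stirlingProduct_neg_two hmn,
    zpow_sub₀ h2, zpow_natCast, zpow_natCast, show (4 : ℚ) = (-2) ^ 2 by norm_num,
    show (-1 / 2 : ℚ) = (-2)⁻¹ by norm_num, inv_pow, ← pow_mul]
  field_simp
  ring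

theorem stmt8 (m n : ℕ) (hm : 1 ≤ m) (hmn : m ≤ n) :
    ∑ k ∈ Finset.Icc m n, (stirling1 n k : ℚ) * stirling2 k m * (-2 : ℚ) ^ (k - m) =
      (n.factorial : ℚ) / m.factorial * m.choose (n - m) * (-2 : ℚ) ^ ((m : ℤ) - n) :=
  stmt8_general m n hmn
end
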